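/- Let A be a commutative ring, L a free abelian group of finite rank, J the augmentation ideal of the group ring A[L], and p a prime number. Then for every ℓ ∈ L and every integer r ≥ 0 one has δ_ℓ^{p^r} − 1 ∈ (pA[L] + J)^{r+1}, i.e. δ_{p^r ℓ} − 1 lies in the (r+1)-st power of the ideal generated by p and J. -/

import Mathlib

/-! Since `x ^ p - 1 = (x - 1) * (1 + x + ⋯ + x ^ (p - 1))` and the second factor is congruent
to `p` modulo `x - 1`, it lies in `I` as soon as `p` and `x - 1` do; so raising `x` to the `p`-th
power moves `x - 1` one step deeper in the `I`-adic filtration. Apply this `r` times with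
`I = (p, J)` and `x = δ_ℓ`, starting from `δ_ℓ - 1 ∈ J`. -/

open AddMonoidAlgebra

/-- The augmentation map of the group ring `A[L]`, sending each group element `δ_ℓ` to `1`. -/
noncomputable def aug (A : Type*) [CommRing A] (L : Type*) [AddCommGroup L] :
    AddMonoidAlgebra A L →ₐ[A] A :=
  AddMonoidAlgebra.lift A A L 1

/-- The augmentation ideal `J ⊆ A[L]`. -/
noncomputable def augIdeal (A : Type*) [CommRing A] (L : Type*) [AddCommGroup L] :
    Ideal (AddMonoidAlgebra A L) :=
  RingHom.ker (aug A L)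

section PowSubOne

variable {R : Type*} [CommRing R] {I : Ideal R} {x : R} {p : ℕ}

theorem geom_sum_mem_of_natCast_mem_of_sub_one_mem (hp : (p : R) ∈ I) (hx : x - 1 ∈ I) :
    ∑ i ∈ Finset.range p, x ^ i ∈ I := by
  have hx1 : Ideal.Quotient.mk I x = 1 := by
    rw [← map_one (Ideal.Quotient.mk I), Ideal.Quotient.eq]
    exact hx
  rw [← Ideal.Quotient.eq_zero_iff_mem] at hp ⊢
  simpa [hx1] using hp

theorem pow_sub_one_mem_pow_succ (hp : (p : R) ∈ I) {n : ℕ} (hn : n ≠ 0) (hx : x - 1 ∈ I ^ n) :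
    x ^ p - 1 ∈ I ^ (n + 1) := by
  rw [← mul_geom_sum, pow_succ]
  exact Ideal.mul_mem_mul hx
    (geom_sum_mem_of_natCast_mem_of_sub_one_mem hp (Ideal.pow_le_self hn hx))

theorem pow_pow_sub_one_mem_pow_succ (hp : (p : R) ∈ I) (hx : x - 1 ∈ I) (r : ℕ) :
    x ^ p ^ r - 1 ∈ I ^ (r + 1) := by
  induction r with
  | zero => simpa using hx
  | succ r ih =>
    rw [pow_succ p r, pow_mul]
    exact pow_sub_one_mem_pow_succ hp r.succ_ne_zero ih

end PowSubOne

section GroupRing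

variable {A : Type*} [CommRing A] {L : Type*} [AddCommGroup L]

theorem of'_nsmul (n : ℕ) (ℓ : L) : of' A L (n • ℓ) = of' A L ℓ ^ n := by
  simp only [of'_eq_of, ofAdd_nsmul, map_pow]

theorem of'_sub_one_mem_augIdeal (ℓ : L) : of' A L ℓ - 1 ∈ augIdeal A L := by
  simp [augIdeal, aug, RingHom.mem_ker, of'_apply]

end GroupRing

theorem statement14_general (A : Type*) [CommRing A] (L : Type*) [AddCommGroup L]
    (p : ℕ) (ℓ : L) (r : ℕ) :
    AddMonoidAlgebra.of' A L ((p ^ r) • ℓ) - 1 ∈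
      (Ideal.span {(p : AddMonoidAlgebra A L)} ⊔ augIdeal A L) ^ (r + 1) ∧
    (AddMonoidAlgebra.of' A L ℓ) ^ (p ^ r) - 1 ∈
      (Ideal.span {(p : AddMonoidAlgebra A L)} ⊔ augIdeal A L) ^ (r + 1) := by
  set I := Ideal.span {(p : A[L])} ⊔ augIdeal A L
  have hpI : (p : A[L]) ∈ I := Ideal.mem_sup_left (Ideal.mem_span_singleton_self _)
  have hδI : of' A L ℓ - 1 ∈ I := Ideal.mem_sup_right (of'_sub_one_mem_augIdeal ℓ)
  have h := pow_pow_sub_one_mem_pow_succ hpI hδI r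
  exact ⟨by rwa [of'_nsmul], h⟩

/-- For a lattice `L`, a commutative ring `A` and a prime `p`, one has
`δ_{p^r ℓ} - 1 = δ_ℓ^{p^r} - 1 ∈ (p, J)^{r+1}` where `J` is the augmentation ideal of `A[L]`. -/
theorem statement14 (A : Type*) [CommRing A] (L : Type*) [AddCommGroup L]
    [Module.Free ℤ L] [Module.Finite ℤ L]
    (p : ℕ) (hp : p.Prime) (ℓ : L) (r : ℕ) :
    AddMonoidAlgebra.of' A L ((p ^ r) • ℓ) - 1 ∈
      (Ideal.span {(p : AddMonoidAlgebra A L)} ⊔ augIdeal A L) ^ (r + 1) ∧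
    (AddMonoidAlgebra.of' A L ℓ) ^ (p ^ r) - 1 ∈
      (Ideal.span {(p : AddMonoidAlgebra A L)} ⊔ augIdeal A L) ^ (r + 1) :=
  statement14_general A L p ℓ r
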